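/- Let Psi(r,t) = M[r] M[r+1] ... M[t] be a product of row-stochastic m-by-m matrices with the property that every product of nB+1 consecutive matrices has all entries bounded below by beta^{nB+1} for some beta in (0,1]. Then for all r <= t, delta(Psi(r,t)) <= gamma^{floor((t-r+1)/(nB+1))}, where gamma = 1 - beta^{nB+1}. -/

import Mathlib

open Finset Matrix

noncomputable def ergDelta {m : ℕ} (A : Matrix (Fin m) (Fin m) ℝ) : ℝ :=
  ⨆ j, ⨆ i1, ⨆ i2, |A i1 j - A i2 j|

noncomputable def ergLambda {m : ℕ} (A : Matrix (Fin m) (Fin m) ℝ) : ℝ :=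
  1 - ⨅ i1, ⨅ i2, ∑ j, min (A i1 j) (A i2 j)

def RowStochastic {m : ℕ} (A : Matrix (Fin m) (Fin m) ℝ) : Prop :=
  (∀ i j, 0 ≤ A i j) ∧ ∀ i, ∑ j, A i j = 1

/-- `Psi M r t = M r * M (r+1) * ... * M t` (the identity matrix when `r > t`). -/
noncomputable def Psi {m : ℕ} (M : ℕ → Matrix (Fin m) (Fin m) ℝ) (r t : ℕ) :
    Matrix (Fin m) (Fin m) ℝ :=
  ((List.range' r (t + 1 - r)).map M).prod

/-! Cut `Psi M r t` into `⌊(t - r + 1) / (n * B + 1)⌋` blocks of `n * B + 1` consecutive factors,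
followed by a remainder. Every entry of a block is at least `β ^ (n * B + 1)`, so its coefficient
`λ` is at most `γ`; Hajnal's inequality `δ (A * B) ≤ λ A * δ B` peels the blocks off one at a time,
and the remainder, being stochastic, has `δ ≤ 1`. -/

theorem rowStochastic_iff_mem {m : ℕ} {A : Matrix (Fin m) (Fin m) ℝ} :
    RowStochastic A ↔ A ∈ Matrix.rowStochastic ℝ (Fin m) :=
  mem_rowStochastic_iff_sum.symm

theorem rowStochastic_Psi {m : ℕ} {M : ℕ → Matrix (Fin m) (Fin m) ℝ}
    (hM : ∀ τ, RowStochastic (M τ)) (r t : ℕ) : RowStochastic (Psi M r t) :=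
  rowStochastic_iff_mem.2 <| Submonoid.list_prod_mem _ <| by
    simpa only [List.forall_mem_map] using fun τ _ => rowStochastic_iff_mem.1 (hM τ)

theorem Psi_mul_Psi {m : ℕ} (M : ℕ → Matrix (Fin m) (Fin m) ℝ) {r s t : ℕ}
    (hrs : r ≤ s + 1) (hst : s ≤ t) : Psi M r s * Psi M (s + 1) t = Psi M r t := by
  have hlen : t + 1 - r = (s + 1 - r) + (t + 1 - (s + 1)) := by omega
  have hstart : s + 1 = r + 1 * (s + 1 - r) := by omega
  rw [Psi, Psi, Psi, hlen, ← List.range'_append, List.map_append, List.prod_append, ← hstart]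

section Coefficients

variable {m : ℕ} {A : Matrix (Fin m) (Fin m) ℝ}

theorem sub_le_ergDelta (A : Matrix (Fin m) (Fin m) ℝ) (i1 i2 j : Fin m) :
    A i1 j - A i2 j ≤ ergDelta A :=
  (le_abs_self _).trans <|
    (le_ciSup (Finite.bddAbove_range _) i2).trans <|
      (le_ciSup (Finite.bddAbove_range (fun i1 => ⨆ i2, |A i1 j - A i2 j|)) i1).trans <|
        le_ciSup (Finite.bddAbove_range (fun j => ⨆ i1, ⨆ i2, |A i1 j - A i2 j|)) j

theorem ergDelta_nonneg (A : Matrix (Fin m) (Fin m) ℝ) : 0 ≤ ergDelta A :=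
  Real.iSup_nonneg fun _ => Real.iSup_nonneg fun _ => Real.iSup_nonneg fun _ => abs_nonneg _

theorem one_sub_sum_min_le_ergLambda (A : Matrix (Fin m) (Fin m) ℝ) (i1 i2 : Fin m) :
    1 - ∑ j, min (A i1 j) (A i2 j) ≤ ergLambda A := by
  have : (⨅ i1, ⨅ i2, ∑ j, min (A i1 j) (A i2 j)) ≤ ∑ j, min (A i1 j) (A i2 j) :=
    (ciInf_le (Finite.bddBelow_range _) i1).trans (ciInf_le (Finite.bddBelow_range _) i2)
  rw [ergLambda]
  linarith

variable [Nonempty (Fin m)]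

theorem ergDelta_le_of_forall_sub_le {c : ℝ} (h : ∀ i1 i2 j, A i1 j - A i2 j ≤ c) :
    ergDelta A ≤ c :=
  ciSup_le fun j => ciSup_le fun i1 => ciSup_le fun i2 =>
    abs_sub_le_iff.2 ⟨h i1 i2 j, h i2 i1 j⟩

theorem ergLambda_le_of_forall_le_sum_min {c : ℝ}
    (h : ∀ i1 i2, c ≤ ∑ j, min (A i1 j) (A i2 j)) : ergLambda A ≤ 1 - c := by
  have : c ≤ ⨅ i1, ⨅ i2, ∑ j, min (A i1 j) (A i2 j) := le_ciInf fun i1 => le_ciInf (h i1)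
  rw [ergLambda]
  linarith

theorem ergDelta_le_one (hA : RowStochastic A) : ergDelta A ≤ 1 :=
  ergDelta_le_of_forall_sub_le fun i1 i2 j => by
    linarith [le_one_of_mem_rowStochastic (rowStochastic_iff_mem.1 hA) (i := i1) (j := j),
      hA.1 i2 j]

theorem ergLambda_nonneg (hA : RowStochastic A) : 0 ≤ ergLambda A := by
  simpa only [min_self, hA.2, sub_self] using
    one_sub_sum_min_le_ergLambda A (Classical.arbitrary _) (Classical.arbitrary _)

theorem ergLambda_le_one_sub_of_le (hA : RowStochastic A) {c : ℝ} (h : ∀ i j, c ≤ A i j) :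
    ergLambda A ≤ 1 - c :=
  ergLambda_le_of_forall_le_sum_min fun i1 i2 =>
    (le_min (h i1 (Classical.arbitrary _)) (h i2 _)).trans <|
      single_le_sum (f := fun j => min (A i1 j) (A i2 j))
        (fun j _ => le_min (hA.1 i1 j) (hA.1 i2 j)) (mem_univ _)

end Coefficients

section Hajnal

variable {m : ℕ} [Nonempty (Fin m)] {A : Matrix (Fin m) (Fin m) ℝ}

/-- Both rows of `A` are split into their common part `c = min (A i1) (A i2)` and a remainder of
mass `1 - ∑ c ≤ λ(A)`; only the remainders see the oscillation of the column `B · j`. -/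
theorem mul_apply_sub_mul_apply_le (hA : RowStochastic A) (B : Matrix (Fin m) (Fin m) ℝ)
    (i1 i2 j : Fin m) : (A * B) i1 j - (A * B) i2 j ≤ ergLambda A * ergDelta B := by
  set c : Fin m → ℝ := fun s => min (A i1 s) (A i2 s)
  obtain ⟨s0, hs0⟩ := Finite.exists_min (fun s => B s j)
  have hdecomp : (A * B) i1 j - (A * B) i2 j =
      ∑ s, (A i1 s - c s) * (B s j - B s0 j) - ∑ s, (A i2 s - c s) * (B s j - B s0 j) := by
    simp only [mul_apply, sub_mul, mul_sub, sum_sub_distrib, ← sum_mul, hA.2]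
    ring
  have hmass : ∑ s, (A i1 s - c s) ≤ ergLambda A := by
    rw [sum_sub_distrib, hA.2]
    exact one_sub_sum_min_le_ergLambda A i1 i2
  have hfirst : ∑ s, (A i1 s - c s) * (B s j - B s0 j) ≤ (∑ s, (A i1 s - c s)) * ergDelta B :=
    (sum_le_sum fun s _ => mul_le_mul_of_nonneg_left (sub_le_ergDelta B s s0 j)
      (sub_nonneg.2 (min_le_left _ _))).trans_eq (sum_mul ..).symm
  have hsecond : 0 ≤ ∑ s, (A i2 s - c s) * (B s j - B s0 j) :=
    sum_nonneg fun s _ => mul_nonneg (sub_nonneg.2 (min_le_right _ _)) (sub_nonneg.2 (hs0 s))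
  rw [hdecomp]
  linarith [mul_le_mul_of_nonneg_right hmass (ergDelta_nonneg B)]

theorem ergDelta_mul_le (hA : RowStochastic A) (B : Matrix (Fin m) (Fin m) ℝ) :
    ergDelta (A * B) ≤ ergLambda A * ergDelta B :=
  ergDelta_le_of_forall_sub_le (mul_apply_sub_mul_apply_le hA B)

end Hajnal

theorem ergDelta_Psi_le_pow_of_ergLambda_le {m : ℕ} [Nonempty (Fin m)]
    {M : ℕ → Matrix (Fin m) (Fin m) ℝ} (hM : ∀ τ, RowStochastic (M τ)) {ℓ : ℕ} {γ : ℝ}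
    (hγ : ∀ r, ergLambda (Psi M r (r + ℓ)) ≤ γ) (q : ℕ) :
    ∀ r t, r + q * (ℓ + 1) ≤ t + 1 → ergDelta (Psi M r t) ≤ γ ^ q := by
  induction q with
  | zero =>
    exact fun r t _ => (ergDelta_le_one (rowStochastic_Psi hM r t)).trans_eq (pow_zero γ).symm
  | succ q ih =>
    intro r t hrt
    rw [Nat.succ_mul] at hrt
    have hγ0 : 0 ≤ γ := (ergLambda_nonneg (rowStochastic_Psi hM 0 _)).trans (hγ 0)
    rw [← Psi_mul_Psi M (s := r + ℓ) (by omega) (by omega), pow_succ']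
    calc ergDelta (Psi M r (r + ℓ) * Psi M (r + ℓ + 1) t)
        ≤ ergLambda (Psi M r (r + ℓ)) * ergDelta (Psi M (r + ℓ + 1) t) :=
          ergDelta_mul_le (rowStochastic_Psi hM r _) _
      _ ≤ γ * γ ^ q :=
          mul_le_mul (hγ r) (ih _ _ (by omega)) (ergDelta_nonneg _) hγ0

theorem ergDelta_Psi_le_general {m n B : ℕ} (hm : 0 < m) (β : ℝ)
    (M : ℕ → Matrix (Fin m) (Fin m) ℝ) (hM : ∀ τ, RowStochastic (M τ))
    (hblock : ∀ r : ℕ, ∀ i j : Fin m, β ^ (n * B + 1) ≤ Psi M r (r + n * B) i j) :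
    ∀ r t : ℕ, r ≤ t →
      ergDelta (Psi M r t) ≤ (1 - β ^ (n * B + 1)) ^ ((t - r + 1) / (n * B + 1)) := by
  have : Nonempty (Fin m) := Fin.pos_iff_nonempty.1 hm
  intro r t hrt
  refine ergDelta_Psi_le_pow_of_ergLambda_le hM
    (fun r => ergLambda_le_one_sub_of_le (rowStochastic_Psi hM r _) (hblock r)) _ r t ?_
  have := Nat.div_mul_le_self (t - r + 1) (n * B + 1)
  omega

/-- If every product of `n*B+1` consecutive row-stochastic matrices has all entries bounded
below by `β^(n*B+1)`, then `delta (Psi M r t) ≤ γ^⌊(t-r+1)/(n*B+1)⌋` with `γ = 1 - β^(n*B+1)`. -/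
theorem ergDelta_Psi_le {m n B : ℕ} (hm : 0 < m) (β : ℝ) (hβ0 : 0 < β) (hβ1 : β ≤ 1)
    (M : ℕ → Matrix (Fin m) (Fin m) ℝ) (hM : ∀ τ, RowStochastic (M τ))
    (hblock : ∀ r : ℕ, ∀ i j : Fin m, β ^ (n * B + 1) ≤ Psi M r (r + n * B) i j) :
    ∀ r t : ℕ, r ≤ t →
      ergDelta (Psi M r t) ≤ (1 - β ^ (n * B + 1)) ^ ((t - r + 1) / (n * B + 1)) :=
  ergDelta_Psi_le_general hm β M hM hblock
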